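/- For integers 1 ≤ i ≤ min(k, ℓ), the generating function ∑_λ q^{|λ|} over i-vacant partitions λ contained in the ℓ × k rectangle equals q^i · qbinom(k, i) · ∑_{j=0}^{ℓ-i} q^{j(k-i+1)} · qbinom(i+j-1, j). -/

import Mathlib

open Polynomial

open scoped Classical

/-- The Gaussian binomial coefficient as a polynomial in `q`. -/
noncomputable def qbinom : ℕ → ℕ → Polynomial ℤ
  | _, 0 => 1
  | 0, _ + 1 => 0
  | a + 1, b + 1 => qbinom a b + X ^ (b + 1) * qbinom a (b + 1)

/-- A partition inside the `ℓ × k` rectangle, encoded as a weakly decreasing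
function `Fin ℓ → Fin (k+1)`. -/
def RectPartition (ℓ k : ℕ) (f : Fin ℓ → Fin (k + 1)) : Prop :=
  ∀ a b : Fin ℓ, a ≤ b → f b ≤ f a

/-- The number of nonzero parts of `f`. -/
noncomputable def plen {ℓ k : ℕ} (f : Fin ℓ → Fin (k + 1)) : ℕ :=
  (Finset.univ.filter (fun a => 0 < (f a : ℕ))).card

/-- The complement of `f` in the rectangle `(k^{plen f})` contains an
`m × (m-1)` rectangle in its southeast corner: `m ≤ plen f` and each of the
last `m` nonzero rows has length at most `k - m + 1`. -/
def ContainsSE {ℓ k : ℕ} (f : Fin ℓ → Fin (k + 1)) (m : ℕ) : Prop :=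
  m ≤ plen f ∧ ∀ a : Fin ℓ, (a : ℕ) < plen f → plen f ≤ (a : ℕ) + m → (f a : ℕ) + m ≤ k + 1

/-- `f` is `i`-vacant: `i` is the largest integer such that the complement of
`f` in `(k^{plen f})` contains an `i × (i-1)` rectangle in its southeast corner. -/
def IsVacant {ℓ k : ℕ} (i : ℕ) (f : Fin ℓ → Fin (k + 1)) : Prop :=
  ContainsSE f i ∧ ¬ ContainsSE f (i + 1)

/-!
An `i`-vacant partition with `i + j` nonzero rows is a block of `j` rows of lengths in
`[k - i + 1, k]` stacked on a block of `i` rows of lengths in `[1, k - i + 1]`, and conversely any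
two such antitone blocks stack to an `i`-vacant partition, their ranges already forcing the order
between them. Subtracting `k - i + 1`, resp. `1`, from each row turns the blocks into arbitrary
partitions in a `j × (i - 1)` and an `i × (k - i)` box, and partitions in an `m × n` box have size
generating function `qbinom (m + n) m` by the `q`-Pascal recursion, splitting on whether the last
row is empty. Summing over `j` gives the formula.
-/

open Finset

theorem antitone_fin_add_iff {m n : ℕ} {α : Type*} [Preorder α] {f : Fin (m + n) → α} :
    Antitone f ↔ Antitone (f ∘ Fin.castAdd n) ∧ Antitone (f ∘ Fin.natAdd m) ∧
      ∀ a b, f (Fin.natAdd m b) ≤ f (Fin.castAdd n a) := by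
  refine ⟨fun hf => ⟨hf.comp_monotone (Fin.strictMono_castAdd n).monotone,
    hf.comp_monotone (Fin.strictMono_natAdd m).monotone,
    fun a b => hf (Fin.le_def.2 (by simp only [Fin.val_castAdd, Fin.val_natAdd]; omega))⟩, ?_⟩
  rintro ⟨hl, hr, hlr⟩ a b
  induction a using Fin.addCases <;> induction b using Fin.addCases <;> intro hab
  · exact hl ((Fin.strictMono_castAdd n).le_iff_le.1 hab)
  · exact hlr _ _
  · simp only [Fin.le_def, Fin.val_castAdd, Fin.val_natAdd] at hab
    omega
  · exact hr ((Fin.strictMono_natAdd m).le_iff_le.1 hab)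

noncomputable def sizeGF {m K : ℕ} (P : (Fin m → Fin (K + 1)) → Prop) : ℤ[X] :=
  ∑ f ∈ univ.filter P, X ^ ∑ a, (f a : ℕ)

section SizeGF

variable {m n K : ℕ}

theorem sizeGF_congr {P Q : (Fin m → Fin (K + 1)) → Prop} (h : ∀ f, P f ↔ Q f) :
    sizeGF P = sizeGF Q :=
  congrArg sizeGF (funext fun f => propext (h f))

theorem sizeGF_append (P : (Fin m → Fin (K + 1)) → Prop) (Q : (Fin n → Fin (K + 1)) → Prop) :
    sizeGF (fun f : Fin (m + n) → Fin (K + 1) => P (f ∘ Fin.castAdd n) ∧ Q (f ∘ Fin.natAdd m))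
      = sizeGF P * sizeGF Q := by
  rw [sizeGF, sizeGF, sizeGF, sum_mul_sum, ← sum_product']
  refine sum_nbij' (fun f => (f ∘ Fin.castAdd n, f ∘ Fin.natAdd m))
    (fun p => Fin.append p.1 p.2) ?_ ?_ ?_ ?_ ?_
  · simp
  · simp [Function.comp_def]
  · simp [Function.comp_def, Fin.append_castAdd_natAdd]
  · intro p _
    ext a <;> simp
  · intro f _
    simp [Fin.sum_univ_add, pow_add]

theorem sizeGF_eq_zero_eq_one : sizeGF (fun f : Fin m → Fin (K + 1) => f = 0) = 1 := by
  rw [sizeGF, sum_eq_single_of_mem 0 (by simp)] <;> simp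

theorem sizeGF_antitone_bounded {lo : ℕ} (hK : lo + n ≤ K) :
    sizeGF (fun f : Fin m → Fin (K + 1) => Antitone f ∧ ∀ a, lo ≤ (f a : ℕ) ∧ (f a : ℕ) ≤ lo + n)
      = X ^ (m * lo) * sizeGF (Antitone : (Fin m → Fin (n + 1)) → Prop) := by
  rw [sizeGF, sizeGF, mul_sum]
  refine sum_bij' (fun f hf a => ⟨f a - lo, by
      simp only [mem_filter, mem_univ, true_and] at hf; have := (hf.2 a).2; omega⟩)
    (fun g _ a => ⟨g a + lo, by omega⟩) ?_ ?_ ?_ ?_ ?_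
  all_goals simp only [mem_filter, mem_univ, true_and, funext_iff, Fin.ext_iff]
  · intro f hf a b hab
    show (f b : ℕ) - lo ≤ (f a : ℕ) - lo
    exact Nat.sub_le_sub_right (hf.1 hab) lo
  · intro g hg
    refine ⟨fun a b hab => ?_, fun a => ?_⟩
    · have := hg hab
      simp only [Fin.le_def] at this ⊢
      omega
    · have := (g a).isLt
      omega
  · intro f hf a
    have := (hf.2 a).1
    omega
  · simp
  · intro f hf
    rw [← pow_add]
    congr 1
    rw [show m * lo = ∑ _a : Fin m, lo by simp, ← sum_add_distrib]
    exact sum_congr rfl fun a _ => by have := (hf.2 a).1; omega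

theorem sizeGF_and_add_sizeGF_and_not (P Q : (Fin m → Fin (K + 1)) → Prop) :
    sizeGF (fun f => P f ∧ Q f) + sizeGF (fun f => P f ∧ ¬ Q f) = sizeGF P := by
  rw [sizeGF, sizeGF, sizeGF, ← sum_filter_add_sum_filter_not (univ.filter P) Q]
  congr 1 <;> apply sum_congr _ fun _ _ => rfl <;> ext f <;> simp

end SizeGF

theorem qbinom_zero_right (n : ℕ) : qbinom n 0 = 1 := by
  cases n <;> rfl

theorem qbinom_of_lt : ∀ {n m : ℕ}, n < m → qbinom n m = 0
  | 0, _ + 1, _ => rfl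
  | n + 1, m + 1, h => by
    rw [qbinom, qbinom_of_lt (by omega), qbinom_of_lt (by omega), mul_zero, add_zero]

theorem qbinom_self (n : ℕ) : qbinom n n = 1 := by
  induction n with
  | zero => rfl
  | succ n ih => rw [qbinom, ih, qbinom_of_lt (by omega), mul_zero, add_zero]

theorem sizeGF_antitone_last_eq_zero (m K : ℕ) :
    sizeGF (fun f : Fin (m + 1) → Fin (K + 1) => Antitone f ∧ f (Fin.last m) = 0)
      = sizeGF (Antitone : (Fin m → Fin (K + 1)) → Prop) := by
  rw [← mul_one (sizeGF (Antitone : (Fin m → Fin (K + 1)) → Prop)),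
    ← sizeGF_eq_zero_eq_one (m := 1) (K := K), ← sizeGF_append]
  refine sizeGF_congr fun f => ?_
  have hl : Fin.natAdd m (0 : Fin 1) = Fin.last m := Fin.ext (by simp)
  simp only [antitone_fin_add_iff, funext_iff, Fin.forall_fin_one, Function.comp_apply, hl,
    Pi.zero_apply]
  constructor
  · rintro ⟨⟨hf, -, -⟩, h0⟩
    exact ⟨hf, h0⟩
  · rintro ⟨hf, h0⟩
    exact ⟨⟨hf, Subsingleton.antitone _, fun a => h0 ▸ Fin.zero_le _⟩, h0⟩

theorem sizeGF_antitone_last_ne_zero (m K : ℕ) :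
    sizeGF (fun f : Fin (m + 1) → Fin (K + 2) => Antitone f ∧ f (Fin.last m) ≠ 0)
      = X ^ (m + 1) * sizeGF (Antitone : (Fin (m + 1) → Fin (K + 1)) → Prop) := by
  have hband := sizeGF_antitone_bounded (m := m + 1) (n := K) (K := K + 1) (lo := 1) (by omega)
  rw [mul_one] at hband
  rw [← hband]
  refine sizeGF_congr fun f => and_congr_right fun hf => ?_
  refine ⟨fun h a => ?_, fun h h0 => by simpa [h0] using (h (Fin.last m)).1⟩
  have hle : (f (Fin.last m) : ℕ) ≤ f a := hf (Fin.le_last a)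
  have hpos : (f (Fin.last m) : ℕ) ≠ 0 := Fin.val_ne_zero_iff.2 h
  have := (f a).isLt
  omega

theorem sizeGF_antitone_eq_qbinom : ∀ m n : ℕ,
    sizeGF (Antitone : (Fin m → Fin (n + 1)) → Prop) = qbinom (m + n) m
  | 0, n => by
    rw [qbinom_zero_right, sizeGF, sum_eq_single_of_mem 0
      (by simp only [mem_filter, mem_univ, true_and]; exact Subsingleton.antitone _)
      fun f _ hf => (hf (Subsingleton.elim _ _)).elim]
    simp
  | m + 1, 0 => by
    have hfin : ∀ f g : Fin (m + 1) → Fin 1, f = g := fun _ _ => Subsingleton.elim _ _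
    rw [add_zero, qbinom_self, sizeGF, sum_eq_single_of_mem 0
      (by simp only [mem_filter, mem_univ, true_and, hfin _ (fun _ => 0)]; exact antitone_const)
      fun f _ hf => (hf (hfin _ _)).elim]
    simp
  | m + 1, n + 1 => by
    rw [← sizeGF_and_add_sizeGF_and_not _ (fun f => f (Fin.last m) = 0),
      sizeGF_antitone_last_eq_zero, sizeGF_antitone_last_ne_zero,
      sizeGF_antitone_eq_qbinom m (n + 1), sizeGF_antitone_eq_qbinom (m + 1) n,
      show m + 1 + (n + 1) = m + n + 1 + 1 by omega, qbinom,
      show m + (n + 1) = m + n + 1 by omega, show m + 1 + n = m + n + 1 by omega]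

section Vacancy

variable {ℓ k : ℕ} {f : Fin ℓ → Fin (k + 1)}

theorem plen_le (f : Fin ℓ → Fin (k + 1)) : plen f ≤ ℓ :=
  (card_filter_le _ _).trans (card_fin ℓ).le

theorem lt_plen_iff (hf : Antitone f) (a : Fin ℓ) : (a : ℕ) < plen f ↔ 0 < (f a : ℕ) := by
  constructor
  · intro ha
    by_contra h0
    have : plen f ≤ a := by
      rw [plen, ← Fin.card_Iio a]
      refine card_le_card fun b hb => ?_
      simp only [mem_filter, mem_univ, true_and, mem_Iio] at hb ⊢
      by_contra hab
      have : (f b : ℕ) ≤ f a := hf (not_lt.1 hab)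
      omega
    omega
  · intro ha
    have : (a : ℕ) + 1 ≤ plen f := by
      rw [plen, ← Fin.card_Iic a]
      refine card_le_card fun b hb => ?_
      simp only [mem_filter, mem_univ, true_and, mem_Iic] at hb ⊢
      have : (f a : ℕ) ≤ f b := hf hb
      omega
    omega

theorem plen_eq_of_pos_iff {p : ℕ} (hp : p ≤ ℓ) (h : ∀ a : Fin ℓ, 0 < (f a : ℕ) ↔ (a : ℕ) < p) :
    plen f = p := by
  rw [plen, filter_congr fun a _ => h a, Fin.card_filter_val_lt, min_eq_right hp]

theorem isVacant_and_plen_eq_iff (hf : Antitone f) {i j : ℕ} (hk : i ≤ k) :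
    IsVacant i f ∧ plen f = i + j ↔ i + j ≤ ℓ ∧ ∀ a : Fin ℓ,
      ((a : ℕ) < j → k - i + 1 ≤ (f a : ℕ)) ∧
      (j ≤ (a : ℕ) → (a : ℕ) < i + j → 1 ≤ (f a : ℕ) ∧ (f a : ℕ) ≤ k - i + 1) ∧
      (i + j ≤ (a : ℕ) → (f a : ℕ) = 0) := by
  have hpos := lt_plen_iff hf
  constructor
  · rintro ⟨⟨⟨-, hSE⟩, hnotSE⟩, hp⟩
    refine ⟨hp ▸ plen_le f, fun a => ⟨fun ha => ?_, fun ha hb => ?_, fun ha => ?_⟩⟩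
    -- failure of the `(i + 1)`-rectangle gives a long row among the last `i + 1` nonzero ones
    · obtain ⟨b, hb, hbj, hfb⟩ : ∃ b : Fin ℓ, (b : ℕ) < i + j ∧ i + j ≤ (b : ℕ) + i + 1 ∧
          k < (f b : ℕ) + i := by
        simpa [ContainsSE, hp, ← add_assoc, show i + 1 ≤ i + j by omega] using hnotSE
      have : (f b : ℕ) ≤ f a := hf (Fin.le_def.2 (by omega))
      omega
    · have := (hpos a).1 (by omega)
      have := hSE a (by omega) (by omega)
      omega
    · have := (hpos a).not.1 (by omega)
      omega
  · rintro ⟨hij, hrows⟩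
    have hp : plen f = i + j := plen_eq_of_pos_iff hij fun a => by
      have := hrows a
      by_cases a < j <;> omega
    refine ⟨⟨⟨by omega, fun a ha ha' => ?_⟩, fun ⟨hj, hSE⟩ => ?_⟩, hp⟩
    · have := hrows a
      omega
    · rw [hp] at hj hSE
      let a : Fin ℓ := ⟨j - 1, by omega⟩
      have ha : (a : ℕ) = j - 1 := rfl
      have := hSE a (by omega) (by omega)
      have := (hrows a).1 (by omega)
      omega

end Vacancy

theorem antitone_isVacant_plen_eq_iff {k i j r : ℕ} (hk : i ≤ k)
    (f : Fin (j + i + r) → Fin (k + 1)) :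
    Antitone f ∧ IsVacant i f ∧ plen f = i + j ↔
      ((Antitone (f ∘ Fin.castAdd r ∘ Fin.castAdd i) ∧ ∀ a,
          k - i + 1 ≤ (f (Fin.castAdd r (Fin.castAdd i a)) : ℕ) ∧
            (f (Fin.castAdd r (Fin.castAdd i a)) : ℕ) ≤ k - i + 1 + (i - 1)) ∧
        (Antitone (f ∘ Fin.castAdd r ∘ Fin.natAdd j) ∧ ∀ b,
          1 ≤ (f (Fin.castAdd r (Fin.natAdd j b)) : ℕ) ∧
            (f (Fin.castAdd r (Fin.natAdd j b)) : ℕ) ≤ 1 + (k - i))) ∧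
      f ∘ Fin.natAdd (j + i) = 0 := by
  rw [and_congr_right fun hf => isVacant_and_plen_eq_iff hf hk]
  simp only [antitone_fin_add_iff, Fin.forall_fin_add, Function.comp_apply, funext_iff,
    Pi.zero_apply, Fin.val_castAdd, Fin.val_natAdd, Fin.le_def, Fin.ext_iff, Fin.val_zero]
  constructor
  · rintro ⟨⟨⟨ht, hb, -⟩, -⟩, -, ⟨htop, hbot⟩, hz⟩
    refine ⟨⟨⟨ht, fun a => ⟨(htop a).1 a.2, ?_⟩⟩, hb, fun b => ?_⟩, fun c => (hz c).2.2 (by omega)⟩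
    · have := (f (Fin.castAdd r (Fin.castAdd i a))).isLt
      omega
    · have := (hbot b).2.1 (by omega) (by omega)
      omega
  · rintro ⟨⟨⟨ht, htop⟩, hb, hbot⟩, hz⟩
    refine ⟨⟨⟨ht, hb, fun a b => ?_⟩, fun c d _ => ?_, fun a c => ?_, fun b c => ?_⟩, by omega,
      ⟨fun a => ⟨fun _ => (htop a).1, fun _ => by omega, fun _ => by omega⟩,
        fun b => ⟨fun _ => by omega, fun _ _ => ⟨(hbot b).1, by have := (hbot b).2; omega⟩,
          fun _ => by omega⟩⟩,
      fun c => ⟨fun _ => by omega, fun _ _ => by omega, fun _ => hz c⟩⟩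
    · have := htop a
      have := hbot b
      omega
    all_goals simp [Fin.le_def, hz]

theorem sizeGF_isVacant_plen_eq {ℓ k i j : ℕ} (h1 : 1 ≤ i) (hk : i ≤ k) (hij : i + j ≤ ℓ) :
    sizeGF (fun f : Fin ℓ → Fin (k + 1) => Antitone f ∧ IsVacant i f ∧ plen f = i + j)
      = X ^ (j * (k - i + 1)) * qbinom (i + j - 1) j * (X ^ i * qbinom k i) := by
  obtain ⟨r, rfl⟩ : ∃ r, ℓ = j + i + r := ⟨ℓ - (j + i), by omega⟩
  have htop := sizeGF_antitone_bounded (m := j) (n := i - 1) (K := k) (lo := k - i + 1) (by omega)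
  have hbot := sizeGF_antitone_bounded (m := i) (n := k - i) (K := k) (lo := 1) (by omega)
  rw [sizeGF_antitone_eq_qbinom, show j + (i - 1) = i + j - 1 by omega] at htop
  rw [sizeGF_antitone_eq_qbinom, mul_one, show i + (k - i) = k by omega] at hbot
  rw [← htop, ← hbot, ← mul_one (_ * _), ← sizeGF_eq_zero_eq_one (m := r) (K := k),
    ← sizeGF_append, ← sizeGF_append]
  exact sizeGF_congr (antitone_isVacant_plen_eq_iff hk)

/-- For `1 ≤ i ≤ min(k,ℓ)`, the generating function of `i`-vacant partitions in
the `ℓ × k` rectangle equals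
`q^i · qbinom(k,i) · ∑_{j=0}^{ℓ-i} q^{j(k-i+1)} qbinom(i+j-1, j)`. -/
theorem vacant_partition_gf (k ℓ i : ℕ) (h1 : 1 ≤ i) (hk : i ≤ k) (hl : i ≤ ℓ) :
    ∑ f ∈ Finset.univ.filter
        (fun f : Fin ℓ → Fin (k + 1) => RectPartition ℓ k f ∧ IsVacant i f),
      (X : Polynomial ℤ) ^ (∑ a, (f a : ℕ))
    = X ^ i * qbinom k i *
        ∑ j ∈ Finset.range (ℓ - i + 1),
          X ^ (j * (k - i + 1)) * qbinom (i + j - 1) j := by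
  have hplen : ∀ f ∈ univ.filter
      (fun f : Fin ℓ → Fin (k + 1) => RectPartition ℓ k f ∧ IsVacant i f),
      plen f - i ∈ range (ℓ - i + 1) :=
    fun f _ => mem_range.2 (by have := plen_le f; omega)
  rw [mul_sum, ← sum_fiberwise_of_maps_to hplen]
  refine sum_congr rfl fun j hj => ?_
  rw [mul_comm, ← sizeGF_isVacant_plen_eq (ℓ := ℓ) h1 hk (by rw [mem_range] at hj; omega), sizeGF]
  refine sum_congr (Finset.ext fun f => ?_) fun _ _ => rfl
  simp only [mem_filter, mem_univ, true_and]
  exact ⟨fun ⟨⟨hf, hv⟩, hp⟩ => ⟨fun a b => hf a b, hv, by have := hv.1.1; omega⟩,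
    fun ⟨hf, hv, hp⟩ => ⟨⟨fun a b => @hf a b, hv⟩, by omega⟩⟩
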